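/- arXiv:2105.00045 — 3 statements merged into one kernel-verified Lean document; each statement's English description precedes it below -/
import Mathlib

section
/- Let n ≥ 2, f > 0, λ1, λ2 ≥ 0, μ⁰ ∈ ℝ^n, η ∈ ℝ^n, and set z_i = √f·μ⁰_i + η_i for i = 1,…,n. If μ̃ ∈ ℝ^n minimizes the pseudo LS-FLSA objective Q(·; z), then f·Σ_{i=1}^n (μ̃_i − μ⁰_i)² ≤ 2√f·Σ_{i=1}^n η_i·(μ̃_i − μ⁰_i) + (λ1 + 2λ2)·Σ_{i=1}^n |μ̃_i − μ⁰_i|. -/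
open Finset
open scoped Classical

/-- Fused lasso penalty `λ1 ∑_{i=1}^n |μ_i| + λ2 ∑_{i=2}^n |μ_i - μ_{i-1}|`. -/
noncomputable def flPen (n : ℕ) (l1 l2 : ℝ) (μ : ℕ → ℝ) : ℝ :=
  l1 * ∑ i ∈ Finset.Icc 1 n, |μ i| + l2 * ∑ i ∈ Finset.Icc 2 n, |μ i - μ (i - 1)|

/-- Pseudo LS-FLSA objective `Q(μ; z) = ∑_{i=1}^n (z_i - √f μ_i)² + P(μ)`. -/
noncomputable def lsObj (n : ℕ) (f l1 l2 : ℝ) (z μ : ℕ → ℝ) : ℝ :=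
  ∑ i ∈ Finset.Icc 1 n, (z i - Real.sqrt f * μ i) ^ 2 + flPen n l1 l2 μ

/-! Comparing `Q(μ̃; z) ≤ Q(μ⁰; z)`: the quadratic part of `Q(μ; z)` expands around `μ⁰`
into `‖η‖² - 2√f ⟨η, μ - μ⁰⟩ + f ‖μ - μ⁰‖²`, while the penalty is Lipschitz in `ℓ¹`
with constant `λ1 + 2λ2`, each coordinate entering two of the differences `μ_i - μ_{i-1}`. -/

theorem Finset.sum_comp_le_sum_of_injOn {ι κ : Type*} {s : Finset ι} {t : Finset κ}
    {g : ι → κ} {d : κ → ℝ} (hg : Set.InjOn g s) (hgst : ∀ i ∈ s, g i ∈ t)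
    (hd : ∀ j ∈ t, 0 ≤ d j) :
    ∑ i ∈ s, d (g i) ≤ ∑ j ∈ t, d j := by
  rw [← sum_image hg]
  exact sum_le_sum_of_subset_of_nonneg (image_subset_iff.2 hgst) fun j hj _ => hd j hj

theorem Finset.sum_abs_le_sum_abs_add_sum_abs_sub {ι : Type*} (s : Finset ι) (a b : ι → ℝ) :
    ∑ i ∈ s, |a i| ≤ ∑ i ∈ s, |b i| + ∑ i ∈ s, |a i - b i| := by
  rw [← sum_add_distrib]
  exact sum_le_sum fun i _ => sub_le_iff_le_add'.1 (abs_sub_abs_le_abs_sub (a i) (b i))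

theorem sum_abs_sub_pred_le (n : ℕ) (a b : ℕ → ℝ) :
    ∑ i ∈ Icc 2 n, |a i - a (i - 1)| ≤
      ∑ i ∈ Icc 2 n, |b i - b (i - 1)| + 2 * ∑ i ∈ Icc 1 n, |a i - b i| := by
  set d : ℕ → ℝ := fun i => |a i - b i|
  have hd : ∀ i ∈ Icc 1 n, 0 ≤ d i := fun i _ => abs_nonneg _
  have hterm : ∀ i, |a i - a (i - 1)| ≤ |b i - b (i - 1)| + (d i + d (i - 1)) := fun i =>
    calc |a i - a (i - 1)| = |(b i - b (i - 1)) + ((a i - b i) - (a (i - 1) - b (i - 1)))| := by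
          ring_nf
      _ ≤ |b i - b (i - 1)| + (d i + d (i - 1)) :=
          (abs_add_le _ _).trans (add_le_add_right (abs_sub _ _) _)
  have hcur : ∑ i ∈ Icc 2 n, d i ≤ ∑ i ∈ Icc 1 n, d i :=
    sum_le_sum_of_subset_of_nonneg (Icc_subset_Icc_left one_le_two) fun i hi _ => hd i hi
  have hprev : ∑ i ∈ Icc 2 n, d (i - 1) ≤ ∑ i ∈ Icc 1 n, d i := by
    refine sum_comp_le_sum_of_injOn (fun i hi j hj hij => ?_) (fun i hi => ?_) hd
    · simp only [coe_Icc, Set.mem_Icc] at hi hj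
      omega
    · simp only [mem_Icc] at hi ⊢
      omega
  calc ∑ i ∈ Icc 2 n, |a i - a (i - 1)|
      ≤ ∑ i ∈ Icc 2 n, (|b i - b (i - 1)| + (d i + d (i - 1))) := sum_le_sum fun i _ => hterm i
    _ ≤ _ := by
      rw [sum_add_distrib, sum_add_distrib]
      linarith

theorem flPen_le_add (n : ℕ) {l1 l2 : ℝ} (hl1 : 0 ≤ l1) (hl2 : 0 ≤ l2) (a b : ℕ → ℝ) :
    flPen n l1 l2 a ≤ flPen n l1 l2 b + (l1 + 2 * l2) * ∑ i ∈ Icc 1 n, |a i - b i| := by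
  have h1 := mul_le_mul_of_nonneg_left (sum_abs_le_sum_abs_add_sum_abs_sub (Icc 1 n) a b) hl1
  have h2 := mul_le_mul_of_nonneg_left (sum_abs_sub_pred_le n a b) hl2
  unfold flPen
  linarith

theorem Finset.sum_sq_add_sub_mul_eq {ι : Type*} (s : Finset ι) (c : ℝ) (μ0 η μ : ι → ℝ) :
    ∑ i ∈ s, (c * μ0 i + η i - c * μ i) ^ 2 =
      ∑ i ∈ s, η i ^ 2 - 2 * c * ∑ i ∈ s, η i * (μ i - μ0 i) +
        c ^ 2 * ∑ i ∈ s, (μ i - μ0 i) ^ 2 := by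
  simp only [mul_sum, ← sum_sub_distrib, ← sum_add_distrib]
  exact sum_congr rfl fun i _ => by ring

theorem lsObj_eq_of_eq_sqrt_mul_add {n : ℕ} {f : ℝ} (hf : 0 ≤ f) (l1 l2 : ℝ) {μ0 η z : ℕ → ℝ}
    (hz : ∀ i, z i = Real.sqrt f * μ0 i + η i) (μ : ℕ → ℝ) :
    lsObj n f l1 l2 z μ =
      ∑ i ∈ Icc 1 n, η i ^ 2 - 2 * Real.sqrt f * ∑ i ∈ Icc 1 n, η i * (μ i - μ0 i) +
        f * ∑ i ∈ Icc 1 n, (μ i - μ0 i) ^ 2 + flPen n l1 l2 μ := by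
  simp only [lsObj, hz, sum_sq_add_sub_mul_eq, Real.sq_sqrt hf]

theorem stmt3_general (n : ℕ) (f : ℝ) (hf : 0 < f)
    (l1 l2 : ℝ) (hl1 : 0 ≤ l1) (hl2 : 0 ≤ l2)
    (μ0 η z : ℕ → ℝ) (hz : ∀ i, z i = Real.sqrt f * μ0 i + η i)
    (μt : ℕ → ℝ)
    (hmin : ∀ μ : ℕ → ℝ, lsObj n f l1 l2 z μt ≤ lsObj n f l1 l2 z μ) :
    f * ∑ i ∈ Finset.Icc 1 n, (μt i - μ0 i) ^ 2 ≤
      2 * Real.sqrt f * ∑ i ∈ Finset.Icc 1 n, η i * (μt i - μ0 i) +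
        (l1 + 2 * l2) * ∑ i ∈ Finset.Icc 1 n, |μt i - μ0 i| := by
  have hQ := hmin μ0
  rw [lsObj_eq_of_eq_sqrt_mul_add hf.le l1 l2 hz, lsObj_eq_of_eq_sqrt_mul_add hf.le l1 l2 hz]
    at hQ
  have hpen := flPen_le_add n hl1 hl2 μ0 μt
  simp only [sub_self, mul_zero, sum_const_zero, zero_pow two_ne_zero] at hQ
  simp only [← abs_sub_comm (μt _)] at hpen
  linarith

theorem stmt3 (n : ℕ) (hn : 2 ≤ n) (f : ℝ) (hf : 0 < f)
    (l1 l2 : ℝ) (hl1 : 0 ≤ l1) (hl2 : 0 ≤ l2)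
    (μ0 η z : ℕ → ℝ) (hz : ∀ i, z i = Real.sqrt f * μ0 i + η i)
    (μt : ℕ → ℝ)
    (hmin : ∀ μ : ℕ → ℝ, lsObj n f l1 l2 z μt ≤ lsObj n f l1 l2 z μ) :
    f * ∑ i ∈ Finset.Icc 1 n, (μt i - μ0 i) ^ 2 ≤
      2 * Real.sqrt f * ∑ i ∈ Finset.Icc 1 n, η i * (μt i - μ0 i) +
        (l1 + 2 * l2) * ∑ i ∈ Finset.Icc 1 n, |μt i - μ0 i| :=
  stmt3_general n f hf l1 l2 hl1 hl2 μ0 η z hz μt hmin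
end

section
/- Fix λ1 ≥ 0 and λ2 ≥ 0 and define L(μ; y) = Σ_{i=1}^n |y_i − μ_i| + λ1·Σ_{i=1}^n |μ_i| + λ2·Σ_{i=2}^n |μ_i − μ_{i−1}|. Suppose y₀ ∈ ℝ^n is such that L(·; y₀) has a unique minimizer μ̂(y₀). Then for every sequence y_m → y₀ in ℝ^n and every choice of minimizers μ_m of L(·; y_m), one has μ_m → μ̂(y₀). In particular, at points of uniqueness the LAD-FLSA solution is a continuous function of the data y. -/
open Finset Filter

/-- The index `i-1` (with `0 - 1 = 0`) inside `Fin n`. -/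
def prevF {n : ℕ} (i : Fin n) : Fin n :=
  ⟨i.val - 1, lt_of_le_of_lt (Nat.sub_le _ _) i.isLt⟩

/-- LAD-FLSA objective
`L(μ; y) = ∑ i |y_i - μ_i| + λ1 ∑ i |μ_i| + λ2 ∑_{i ≥ 2} |μ_i - μ_{i-1}|`
(the `i = 1` term of the third sum vanishes since `prevF 0 = 0`). -/
noncomputable def ladObjF (n : ℕ) (l1 l2 : ℝ) (y μ : Fin n → ℝ) : ℝ :=
  ∑ i, |y i - μ i| + l1 * ∑ i, |μ i| + l2 * ∑ i, |μ i - μ (prevF i)|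

/-!
A minimizer `μ` of `L(·; y)` is no worse than `μ = 0`, so `|y i - μ i| ≤ L(μ; y) ≤ L(0; y) = ∑ |y j|`;
hence minimizers for convergent data stay in a fixed compact ball. Any subsequential limit of
the minimizers `μ_m` is, by joint continuity of `L`, a minimizer of `L(·; y₀)`, so it is `μ̂(y₀)`.
-/

section ArgminContinuity

variable {X Y β : Type*} [TopologicalSpace X] [TopologicalSpace Y] [FirstCountableTopology Y]
  [TopologicalSpace β] [Preorder β] [OrderClosedTopology β]

theorem tendsto_of_isMinimizer_of_unique {f : X → Y → β} (hf : Continuous (Function.uncurry f))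
    {x₀ : X} {y₀ : Y} (huniq : ∀ y, (∀ y', f x₀ y ≤ f x₀ y') → y = y₀)
    {x : ℕ → X} (hx : Tendsto x atTop (nhds x₀)) {y : ℕ → Y}
    (hy : ∀ m y', f (x m) (y m) ≤ f (x m) y') {K : Set Y} (hK : IsCompact K) (hyK : ∀ m, y m ∈ K) :
    Tendsto y atTop (nhds y₀) := by
  refine tendsto_of_subseq_tendsto fun ns hns => ?_
  obtain ⟨a, -, φ, hφ, hya⟩ := hK.tendsto_subseq fun k => hyK (ns k)
  have hxφ : Tendsto (fun k => x (ns (φ k))) atTop (nhds x₀) :=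
    hx.comp (hns.comp hφ.tendsto_atTop)
  have ha : a = y₀ := huniq a fun y' =>
    le_of_tendsto_of_tendsto' ((hf.tendsto (x₀, a)).comp (hxφ.prodMk_nhds hya))
      ((hf.tendsto (x₀, y')).comp (hxφ.prodMk_nhds tendsto_const_nhds)) fun k => hy _ _
  exact ⟨φ, ha ▸ hya⟩

end ArgminContinuity

section LadObjective

variable {n : ℕ} {l1 l2 : ℝ}

theorem continuous_ladObjF : Continuous (Function.uncurry (ladObjF n l1 l2)) := by
  unfold ladObjF Function.uncurry
  fun_prop

theorem ladObjF_zero_right (y : Fin n → ℝ) : ladObjF n l1 l2 y 0 = ∑ i, |y i| := by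
  simp [ladObjF]

theorem abs_sub_le_ladObjF (hl1 : 0 ≤ l1) (hl2 : 0 ≤ l2) (y μ : Fin n → ℝ) (i : Fin n) :
    |y i - μ i| ≤ ladObjF n l1 l2 y μ := by
  have hsum : |y i - μ i| ≤ ∑ j, |y j - μ j| :=
    single_le_sum (f := fun j => |y j - μ j|) (fun j _ => abs_nonneg _) (mem_univ i)
  have h1 : 0 ≤ l1 * ∑ j, |μ j| := mul_nonneg hl1 (sum_nonneg fun j _ => abs_nonneg _)
  have h2 : 0 ≤ l2 * ∑ j, |μ j - μ (prevF j)| :=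
    mul_nonneg hl2 (sum_nonneg fun j _ => abs_nonneg _)
  unfold ladObjF
  linarith

theorem abs_le_of_isMinimizer_ladObjF (hl1 : 0 ≤ l1) (hl2 : 0 ≤ l2) {y μ : Fin n → ℝ}
    (hμ : ∀ μ', ladObjF n l1 l2 y μ ≤ ladObjF n l1 l2 y μ') (i : Fin n) :
    |μ i| ≤ 2 * ∑ j, |y j| := by
  have hyi : |y i| ≤ ∑ j, |y j| :=
    single_le_sum (f := fun j => |y j|) (fun j _ => abs_nonneg _) (mem_univ i)
  calc |μ i| ≤ |y i| + |y i - μ i| := by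
        linarith [abs_sub_abs_le_abs_sub (μ i) (y i), abs_sub_comm (μ i) (y i)]
    _ ≤ ∑ j, |y j| + ladObjF n l1 l2 y 0 :=
        add_le_add hyi ((abs_sub_le_ladObjF hl1 hl2 y μ i).trans (hμ 0))
    _ = 2 * ∑ j, |y j| := by rw [ladObjF_zero_right]; ring

end LadObjective

theorem stmt15_general (n : ℕ) (l1 l2 : ℝ) (hl1 : 0 ≤ l1) (hl2 : 0 ≤ l2)
    (y0 : Fin n → ℝ) (μh0 : Fin n → ℝ)
    -- `μh0` is the unique minimizer of `L(·; y0)`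
    (huniq : ∀ μ, (∀ μ', ladObjF n l1 l2 y0 μ ≤ ladObjF n l1 l2 y0 μ') → μ = μh0)
    -- a sequence of data converging to `y0` and minimizers for it
    (y : ℕ → Fin n → ℝ) (hy : Tendsto y atTop (nhds y0))
    (μs : ℕ → Fin n → ℝ)
    (hμs : ∀ m, ∀ μ, ladObjF n l1 l2 (y m) (μs m) ≤ ladObjF n l1 l2 (y m) μ) :
    Tendsto μs atTop (nhds μh0) := by
  obtain ⟨C, hC⟩ : BddAbove (Set.range fun m => ∑ j, |y m j|) :=
    ((continuous_finsetSum _ fun j _ => (continuous_apply j).abs).tendsto y0).comp hy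
      |>.bddAbove_range
  have hC0 : 0 ≤ C := (sum_nonneg fun j _ => abs_nonneg (y 0 j)).trans (hC ⟨0, rfl⟩)
  have hball : ∀ m, μs m ∈ Metric.closedBall 0 (2 * C) := fun m => by
    rw [mem_closedBall_zero_iff, pi_norm_le_iff_of_nonneg (by positivity)]
    exact fun i => (abs_le_of_isMinimizer_ladObjF hl1 hl2 (hμs m) i).trans (by
      linarith [hC ⟨m, rfl⟩])
  exact tendsto_of_isMinimizer_of_unique continuous_ladObjF huniq hy hμs
    (isCompact_closedBall 0 (2 * C)) hball

theorem stmt15 (n : ℕ) (l1 l2 : ℝ) (hl1 : 0 ≤ l1) (hl2 : 0 ≤ l2)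
    (y0 : Fin n → ℝ) (μh0 : Fin n → ℝ)
    -- `μh0` is the unique minimizer of `L(·; y0)`
    (hmin : ∀ μ, ladObjF n l1 l2 y0 μh0 ≤ ladObjF n l1 l2 y0 μ)
    (huniq : ∀ μ, (∀ μ', ladObjF n l1 l2 y0 μ ≤ ladObjF n l1 l2 y0 μ') → μ = μh0)
    -- a sequence of data converging to `y0` and minimizers for it
    (y : ℕ → Fin n → ℝ) (hy : Tendsto y atTop (nhds y0))
    (μs : ℕ → Fin n → ℝ)
    (hμs : ∀ m, ∀ μ, ladObjF n l1 l2 (y m) (μs m) ≤ ladObjF n l1 l2 (y m) μ) :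
    Tendsto μs atTop (nhds μh0) :=
  stmt15_general n l1 l2 hl1 hl2 y0 μh0 huniq y hy μs hμs
end

section
/- Let Z be the n × n lower-triangular matrix of ones, i.e., Z_{ij} = 1 if j ≤ i and Z_{ij} = 0 otherwise. Let ρ_1 ≤ … ≤ ρ_n denote the eigenvalues of (1/n)·ZᵀZ. Then for all sufficiently large n: ρ_1 < 1/(3n) and ρ_n > 4·√n. In particular ρ_1 → 0 and ρ_n → ∞ as n → ∞, so the regularity condition that (1/n)·ZᵀZ converges to a positive definite matrix fails for this design. -/
/-!
Both bounds are Rayleigh-quotient bounds: if every eigenvalue of a Hermitian `A` were at least `c`,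
then `A - c` would be positive semidefinite, so `xᴴ A x ≥ c xᴴ x` for all `x` (symmetrically for
upper bounds). Since `Z` takes partial sums, `xᵀ (n⁻¹ ZᵀZ) x = n⁻¹ ‖Z x‖²`. The constant vector has
partial sums `1, …, n`, giving a quotient of about `n / 3`; the jumps `1, -2, 2, -2, …` of the
alternating signal `(-1)^i` have partial sums `±1`, giving `1 / (4n - 3)`.
-/

open Filter Matrix Finset
open scoped MatrixOrder ComplexOrder

namespace Matrix.IsHermitian

variable {𝕜 n : Type*} [RCLike 𝕜] [Fintype n] [DecidableEq n] {A : Matrix n n 𝕜}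

theorem algebraMap_le_iff_le_eigenvalues (hA : A.IsHermitian) {c : ℝ} :
    algebraMap ℝ _ c ≤ A ↔ ∀ i, c ≤ hA.eigenvalues i := by
  rw [algebraMap_le_iff_le_spectrum (a := A) hA.isSelfAdjoint,
    hA.spectrum_real_eq_range_eigenvalues]
  simp

theorem le_algebraMap_iff_eigenvalues_le (hA : A.IsHermitian) {c : ℝ} :
    A ≤ algebraMap ℝ _ c ↔ ∀ i, hA.eigenvalues i ≤ c := by
  rw [le_algebraMap_iff_spectrum_le (a := A) hA.isSelfAdjoint,
    hA.spectrum_real_eq_range_eigenvalues]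
  simp

theorem exists_eigenvalues_lt_of_dotProduct_mulVec_lt (hA : A.IsHermitian) {c : ℝ} (x : n → 𝕜)
    (h : star x ⬝ᵥ A *ᵥ x < (c : 𝕜) * (star x ⬝ᵥ x)) : ∃ i, hA.eigenvalues i < c := by
  by_contra! hc
  have hpsd := (le_iff.1 (hA.algebraMap_le_iff_le_eigenvalues.2 hc)).dotProduct_mulVec_nonneg x
  rw [sub_mulVec, dotProduct_sub, Algebra.algebraMap_eq_smul_one, smul_mulVec, one_mulVec,
    dotProduct_smul, sub_nonneg, RCLike.real_smul_eq_coe_mul] at hpsd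
  exact hpsd.not_gt h

theorem exists_lt_eigenvalues_of_lt_dotProduct_mulVec (hA : A.IsHermitian) {c : ℝ} (x : n → 𝕜)
    (h : (c : 𝕜) * (star x ⬝ᵥ x) < star x ⬝ᵥ A *ᵥ x) : ∃ i, c < hA.eigenvalues i := by
  by_contra! hc
  have hpsd := (le_iff.1 (hA.le_algebraMap_iff_eigenvalues_le.2 hc)).dotProduct_mulVec_nonneg x
  rw [sub_mulVec, dotProduct_sub, Algebra.algebraMap_eq_smul_one, smul_mulVec, one_mulVec,
    dotProduct_smul, sub_nonneg, RCLike.real_smul_eq_coe_mul] at hpsd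
  exact hpsd.not_gt h

end Matrix.IsHermitian

theorem Matrix.star_dotProduct_transpose_mul_self_mulVec {m n R : Type*} [Fintype m] [Fintype n]
    [CommSemiring R] [StarRing R] [TrivialStar R] (A : Matrix m n R) (x : n → R) :
    star x ⬝ᵥ (Aᵀ * A) *ᵥ x = A *ᵥ x ⬝ᵥ A *ᵥ x := by
  rw [star_trivial, ← mulVec_mulVec, dotProduct_mulVec, vecMul_transpose]

def lowerOnes (n : ℕ) : Matrix (Fin n) (Fin n) ℝ := of fun i j => if j ≤ i then 1 else 0

theorem lowerOnes_mulVec_apply {n : ℕ} (v : ℕ → ℝ) (i : Fin n) :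
    (lowerOnes n *ᵥ fun k => v k) i = ∑ k ∈ range (i + 1), v k := by
  have hfilter : {k ∈ range n | k ≤ (i : ℕ)} = range (i + 1) := by
    ext k
    simp only [mem_filter, mem_range]
    omega
  simp only [mulVec, dotProduct, lowerOnes, of_apply, ite_mul, one_mul, zero_mul, Fin.le_def]
  rw [Fin.sum_univ_eq_sum_range (fun k => if k ≤ (i : ℕ) then v k else 0), ← sum_filter, hfilter]

theorem cube_le_three_mul_sum_range_succ_sq (n : ℕ) :
    (n : ℝ) ^ 3 ≤ 3 * ∑ i ∈ range n, ((i : ℝ) + 1) ^ 2 := by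
  induction n with
  | zero => simp
  | succ n ih =>
    push_cast [sum_range_succ]
    nlinarith [n.cast_nonneg (α := ℝ)]

theorem cube_le_three_mul_lowerOnes_mulVec_one_dotProduct_self (n : ℕ) :
    (n : ℝ) ^ 3 ≤ 3 * (lowerOnes n *ᵥ 1 ⬝ᵥ lowerOnes n *ᵥ 1) := by
  have hpartial (i : Fin n) : (lowerOnes n *ᵥ 1) i = ((i : ℕ) : ℝ) + 1 :=
    (lowerOnes_mulVec_apply (fun _ => 1) i).trans (by simp)
  rw [dotProduct, Fintype.sum_congr _ _ fun i => by rw [hpartial, ← sq],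
    Fin.sum_univ_eq_sum_range (fun i => ((i : ℝ) + 1) ^ 2)]
  exact cube_le_three_mul_sum_range_succ_sq n

def alternatingJumps (k : ℕ) : ℝ := if k = 0 then 1 else 2 * (-1) ^ k

theorem sum_range_succ_alternatingJumps (i : ℕ) :
    ∑ k ∈ range (i + 1), alternatingJumps k = (-1) ^ i := by
  induction i with
  | zero => simp [alternatingJumps]
  | succ i ih =>
    rw [sum_range_succ, ih, alternatingJumps, if_neg i.succ_ne_zero]
    ring

theorem lowerOnes_mulVec_alternatingJumps_dotProduct_self (n : ℕ) :
    (lowerOnes n *ᵥ fun k => alternatingJumps k) ⬝ᵥ (lowerOnes n *ᵥ fun k => alternatingJumps k)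
      = n := by
  have hpartial (i : Fin n) : (lowerOnes n *ᵥ fun k => alternatingJumps k) i = (-1) ^ (i : ℕ) := by
    rw [lowerOnes_mulVec_apply, sum_range_succ_alternatingJumps]
  simp [dotProduct, hpartial, ← mul_pow]

theorem alternatingJumps_dotProduct_self {n : ℕ} (hn : n ≠ 0) :
    (fun k : Fin n => alternatingJumps k) ⬝ᵥ (fun k => alternatingJumps k) = 4 * n - 3 := by
  obtain ⟨m, rfl⟩ := Nat.exists_eq_add_one_of_ne_zero hn
  have hsq (k : ℕ) : alternatingJumps (k + 1) ^ 2 = 4 := by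
    rw [alternatingJumps, if_neg k.succ_ne_zero, mul_pow, ← pow_mul, pow_mul', neg_one_sq, one_pow]
    norm_num
  simp only [dotProduct, ← sq]
  rw [Fin.sum_univ_eq_sum_range (fun k => alternatingJumps k ^ 2), sum_range_succ',
    sum_congr rfl fun k _ => hsq k, sum_const, card_range, nsmul_eq_mul]
  norm_num [alternatingJumps]
  ring

theorem stmt17 :
    ∀ᶠ n : ℕ in atTop,
      ∀ Z : Matrix (Fin n) (Fin n) ℝ,
        (∀ i j : Fin n, Z i j = if j ≤ i then (1 : ℝ) else 0) →
        ∀ hA : (((n : ℝ)⁻¹) • (Zᵀ * Z)).IsHermitian,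
          (∃ i, hA.eigenvalues i < 1 / (3 * (n : ℝ))) ∧
          (∃ i, 4 * Real.sqrt n < hA.eigenvalues i) := by
  filter_upwards [eventually_gt_atTop 144] with n hn Z hZ hA
  obtain rfl : Z = lowerOnes n := Matrix.ext hZ
  have hform (x : Fin n → ℝ) : star x ⬝ᵥ ((n : ℝ)⁻¹ • ((lowerOnes n)ᵀ * lowerOnes n)) *ᵥ x =
      (n : ℝ)⁻¹ * (lowerOnes n *ᵥ x ⬝ᵥ lowerOnes n *ᵥ x) := by
    rw [smul_mulVec, dotProduct_smul, star_dotProduct_transpose_mul_self_mulVec, smul_eq_mul]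
  have hn0 : (0 : ℝ) < n := by positivity
  have hn144 : (144 : ℝ) < n := by exact_mod_cast hn
  constructor
  · refine hA.exists_eigenvalues_lt_of_dotProduct_mulVec_lt (fun k => alternatingJumps k) ?_
    rw [hform, lowerOnes_mulVec_alternatingJumps_dotProduct_self, star_trivial,
      alternatingJumps_dotProduct_self (by omega), RCLike.ofReal_real_eq_id, id]
    field_simp
    linarith
  · refine hA.exists_lt_eigenvalues_of_lt_dotProduct_mulVec 1 ?_
    rw [hform, star_trivial, one_dotProduct_one, Fintype.card_fin, RCLike.ofReal_real_eq_id, id]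
    have hs : 12 < √n := by
      rw [Real.lt_sqrt (by norm_num)]
      linarith
    have hsq : √n ^ 2 = n := Real.sq_sqrt hn0.le
    calc 4 * √n * n < (n : ℝ) ^ 2 / 3 := by
          nlinarith [mul_pos (pow_pos (by linarith : (0 : ℝ) < √n) 3) (sub_pos.2 hs)]
      _ ≤ (n : ℝ)⁻¹ * (lowerOnes n *ᵥ 1 ⬝ᵥ lowerOnes n *ᵥ 1) := by
        rw [le_inv_mul_iff₀ hn0]
        linarith [cube_le_three_mul_lowerOnes_mulVec_one_dotProduct_self n]
end
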